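/- arXiv:1712.01716 — 3 statements merged into one kernel-verified Lean document; each statement's English description precedes it below -/
import Mathlib

section
/- Suppose c ∈ ℝ^m_{>0} is a complex balanced equilibrium of a reaction network with rate constants κ_k. Let θ_i : ℤ → ℝ_{≥0} satisfy θ_i(x) = 0 for x ≤ 0, θ_i(j) > 0 for all integers j ≥ 1, and θ_i(x) → ∞ as x → ∞. Then the product-form measure π_c is summable, i.e. Z := ∑_{x ∈ ℤ^m_{≥0}} ∏_{i=1}^m c_i^{x_i} / ∏_{j=1}^{x_i} θ_i(j) < ∞, and consequently π_c/Z is a stationary distribution for the stochastic model with the general intensity functions λ_k: it has total mass 1 and satisfies ∑_{k=1}^K (π_c/Z)(x − y_k' + y_k) λ_k(x − y_k' + y_k) = (π_c/Z)(x) ∑_{k=1}^K λ_k(x) for every x ∈ ℤ^m_{≥0}. -/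
/-!
Since `θ_i(x_i) π_c(x) = c_i π_c(x - e_i)` for every `x ∈ ℤ^m`, one has
`π_c(ξ) λ_k(ξ) = κ_k c^{y_k} π_c(ξ - y_k)`. Both sides of the stationarity equation at `x` are
therefore sums of `κ_k c^{y_k} π_c(x - z)` over reactions grouped by a complex `z` (the product
complex on the left, the source complex on the right), and complex balance matches the groups.
Summability holds coordinatewise by the ratio test, because `θ_i → ∞`, hence for the product.
-/

open Finset Filter

/-- General (non-mass action) intensity function:
`λ_k(x) = κ_k ∏_i ∏_{j=0}^{y_{ki}-1} θ_i(x_i - j)`. -/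
noncomputable def genIntensity (m K : ℕ) (y : Fin K → Fin m → ℕ) (κ : Fin K → ℝ)
    (θ : Fin m → ℤ → ℝ) (k : Fin K) (x : Fin m → ℤ) : ℝ :=
  κ k * ∏ i, ∏ j ∈ Finset.range (y k i), θ i (x i - j)

/-- Product-form measure `π_c(x) = ∏_i c_i^{x_i} / ∏_{j=1}^{x_i} θ_i(j)`,
extended by `0` outside `ℤ^m_{≥0}`. -/
noncomputable def prodForm (m : ℕ) (c : Fin m → ℝ) (θ : Fin m → ℤ → ℝ)
    (x : Fin m → ℤ) : ℝ :=
  if ∀ i, 0 ≤ x i then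
    ∏ i, (c i ^ (x i).toNat / ∏ j ∈ Finset.range (x i).toNat, θ i (j + 1))
  else 0

/-- `c` is a complex balanced equilibrium: for each complex `z`,
`∑_{k : y_k' = z} κ_k c^{y_k} = ∑_{k : y_k = z} κ_k c^{y_k}`. -/
def complexBalanced (m K : ℕ) (y y' : Fin K → Fin m → ℕ) (κ : Fin K → ℝ)
    (c : Fin m → ℝ) : Prop :=
  ∀ z : Fin m → ℕ, ((∃ k, y k = z) ∨ (∃ k, y' k = z)) →
    ∑ k ∈ Finset.univ.filter (fun k => y' k = z), κ k * ∏ i, c i ^ y k i =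
    ∑ k ∈ Finset.univ.filter (fun k => y k = z), κ k * ∏ i, c i ^ y k i

/-- The stationarity equation:
`∑_k μ(x - y_k' + y_k) λ_k(x - y_k' + y_k) = μ(x) ∑_k λ_k(x)` for all `x ∈ ℤ^m_{≥0}`. -/
def stationaryEq (m K : ℕ) (y y' : Fin K → Fin m → ℕ)
    (μ : (Fin m → ℤ) → ℝ) (lam : Fin K → (Fin m → ℤ) → ℝ) : Prop :=
  ∀ x : Fin m → ℕ,
    ∑ k : Fin K, μ (fun i => (x i : ℤ) - y' k i + y k i) *
        lam k (fun i => (x i : ℤ) - y' k i + y k i)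
      = μ (fun i => (x i : ℤ)) * ∑ k : Fin K, lam k (fun i => (x i : ℤ))

theorem summable_fintype_prod_of_nonneg {ι : Type*} [Fintype ι] {β : ι → Type*}
    (f : ∀ i, β i → ℝ) (hf : ∀ i b, 0 ≤ f i b) (hsum : ∀ i, Summable (f i)) :
    Summable (fun x : ∀ i, β i => ∏ i, f i (x i)) := by
  classical
  refine summable_of_sum_le (c := ∏ i, ∑' b, f i b)
    (fun x => prod_nonneg fun i _ => hf i (x i)) fun u => ?_
  have hsub : u ⊆ Fintype.piFinset fun i => u.image (· i) :=
    fun x hx => Fintype.mem_piFinset.2 fun i => mem_image_of_mem _ hx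
  calc ∑ x ∈ u, ∏ i, f i (x i)
      ≤ ∑ x ∈ Fintype.piFinset fun i => u.image (· i), ∏ i, f i (x i) :=
        sum_le_sum_of_subset_of_nonneg hsub fun x _ _ => prod_nonneg fun i _ => hf i (x i)
    _ = ∏ i, ∑ b ∈ u.image (· i), f i b := (prod_univ_sum _ _).symm
    _ ≤ ∏ i, ∑' b, f i b :=
        prod_le_prod (fun i _ => sum_nonneg fun b _ => hf i b)
          fun i _ => (hsum i).sum_le_tsum _ fun b _ => hf i b

theorem summable_pow_div_prod_range_of_tendsto_atTop (c : ℝ) {a : ℕ → ℝ}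
    (ha : Tendsto a atTop atTop) :
    Summable (fun n => c ^ n / ∏ j ∈ range n, a j) := by
  refine summable_of_ratio_norm_eventually_le (r := 1 / 2) (by norm_num) ?_
  filter_upwards [ha.eventually_ge_atTop (2 * |c| + 1)] with n hn
  have hpos : 0 < a n := by linarith [abs_nonneg c]
  have hratio : |c| / a n ≤ 1 / 2 := by
    rw [div_le_div_iff₀ hpos (by norm_num)]
    linarith
  rw [prod_range_succ, pow_succ, ← div_mul_div_comm, norm_mul (_ / _), norm_div c,
    Real.norm_eq_abs c, Real.norm_of_nonneg hpos.le, mul_comm]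
  exact mul_le_mul_of_nonneg_right hratio (norm_nonneg _)

noncomputable def prodFormFactor (c : ℝ) (θ : ℤ → ℝ) (v : ℤ) : ℝ :=
  if 0 ≤ v then c ^ v.toNat / ∏ j ∈ range v.toNat, θ (j + 1) else 0

theorem prodFormFactor_mul_apply {c : ℝ} {θ : ℤ → ℝ} (hθ0 : ∀ x : ℤ, x ≤ 0 → θ x = 0)
    (hθpos : ∀ j : ℤ, 1 ≤ j → 0 < θ j) (v : ℤ) :
    prodFormFactor c θ v * θ v = c * prodFormFactor c θ (v - 1) := by
  rcases le_or_gt v 0 with hv | hv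
  · rw [hθ0 v hv, mul_zero, prodFormFactor, if_neg (by omega), mul_zero]
  obtain ⟨n, rfl⟩ : ∃ n : ℕ, v = n + 1 := ⟨(v - 1).toNat, by omega⟩
  have hθn : θ (n + 1) ≠ 0 := (hθpos _ (by omega)).ne'
  have hprod : ∏ j ∈ range n, θ ((j : ℤ) + 1) ≠ 0 :=
    prod_ne_zero_iff.2 fun j _ => (hθpos _ (by omega)).ne'
  rw [prodFormFactor, if_pos (by omega), prodFormFactor, if_pos (by omega),
    show ((n : ℤ) + 1).toNat = n + 1 by omega, show ((n : ℤ) + 1 - 1).toNat = n by omega,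
    prod_range_succ, pow_succ]
  field_simp

theorem prodFormFactor_mul_prod_range {c : ℝ} {θ : ℤ → ℝ} (hθ0 : ∀ x : ℤ, x ≤ 0 → θ x = 0)
    (hθpos : ∀ j : ℤ, 1 ≤ j → 0 < θ j) (s : ℕ) (v : ℤ) :
    prodFormFactor c θ v * ∏ j ∈ range s, θ (v - j) = c ^ s * prodFormFactor c θ (v - s) := by
  induction s generalizing v with
  | zero => simp
  | succ s ih =>
    have hshift : ∏ j ∈ range (s + 1), θ (v - j) = θ v * ∏ j ∈ range s, θ (v - 1 - j) := by
      rw [prod_range_succ', mul_comm]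
      push_cast
      simp only [sub_zero, sub_add_eq_sub_sub_swap]
    rw [hshift, ← mul_assoc, prodFormFactor_mul_apply hθ0 hθpos, mul_assoc, ih, ← mul_assoc,
      ← pow_succ', sub_sub]
    push_cast
    ring_nf

theorem prodForm_eq_prod_prodFormFactor (m : ℕ) (c : Fin m → ℝ) (θ : Fin m → ℤ → ℝ)
    (ξ : Fin m → ℤ) : prodForm m c θ ξ = ∏ i, prodFormFactor (c i) (θ i) (ξ i) := by
  by_cases hξ : ∀ i, 0 ≤ ξ i
  · rw [prodForm, if_pos hξ]
    exact prod_congr rfl fun i _ => by rw [prodFormFactor, if_pos (hξ i)]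
  · obtain ⟨i, hi⟩ := not_forall.1 hξ
    rw [prodForm, if_neg hξ, eq_comm]
    exact prod_eq_zero (mem_univ i) (by rw [prodFormFactor, if_neg hi])

theorem prodForm_mul_prod_range {m : ℕ} (c : Fin m → ℝ) {θ : Fin m → ℤ → ℝ}
    (hθ0 : ∀ i, ∀ x : ℤ, x ≤ 0 → θ i x = 0) (hθpos : ∀ i, ∀ j : ℤ, 1 ≤ j → 0 < θ i j)
    (ξ : Fin m → ℤ) (z : Fin m → ℕ) :
    prodForm m c θ ξ * ∏ i, ∏ j ∈ range (z i), θ i (ξ i - j) =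
      (∏ i, c i ^ z i) * prodForm m c θ (fun i => ξ i - z i) := by
  simp only [prodForm_eq_prod_prodFormFactor, ← prod_mul_distrib,
    prodFormFactor_mul_prod_range (hθ0 _) (hθpos _)]

theorem prodForm_mul_genIntensity {m K : ℕ} (y : Fin K → Fin m → ℕ) (κ : Fin K → ℝ)
    (c : Fin m → ℝ) {θ : Fin m → ℤ → ℝ}
    (hθ0 : ∀ i, ∀ x : ℤ, x ≤ 0 → θ i x = 0) (hθpos : ∀ i, ∀ j : ℤ, 1 ≤ j → 0 < θ i j)
    (k : Fin K) (ξ : Fin m → ℤ) :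
    prodForm m c θ ξ * genIntensity m K y κ θ k ξ =
      κ k * (∏ i, c i ^ y k i) * prodForm m c θ (fun i => ξ i - y k i) := by
  rw [genIntensity, mul_left_comm, prodForm_mul_prod_range c hθ0 hθpos, mul_assoc]

theorem complexBalanced.sum_mul_product_eq_sum_mul_source {m K : ℕ}
    {y y' : Fin K → Fin m → ℕ} {κ : Fin K → ℝ} {c : Fin m → ℝ}
    (hcb : complexBalanced m K y y' κ c) (Φ : (Fin m → ℕ) → ℝ) :
    ∑ k, κ k * (∏ i, c i ^ y k i) * Φ (y' k) = ∑ k, κ k * (∏ i, c i ^ y k i) * Φ (y k) := by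
  classical
  set complexes := univ.image y ∪ univ.image y'
  have hfiber : ∀ w : Fin K → Fin m → ℕ, (∀ k, w k ∈ complexes) →
      ∑ k, κ k * (∏ i, c i ^ y k i) * Φ (w k) =
        ∑ z ∈ complexes, (∑ k with w k = z, κ k * ∏ i, c i ^ y k i) * Φ z := by
    intro w hw
    rw [← sum_fiberwise_of_maps_to fun k _ => hw k]
    refine sum_congr rfl fun z _ => ?_
    rw [sum_mul]
    exact sum_congr rfl fun k hk => by rw [(mem_filter.1 hk).2]
  rw [hfiber y' fun k => mem_union_right _ (mem_image_of_mem y' (mem_univ k)),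
    hfiber y fun k => mem_union_left _ (mem_image_of_mem y (mem_univ k))]
  refine sum_congr rfl fun z hz => congrArg (· * Φ z) (hcb z ?_)
  rcases mem_union.1 hz with hz | hz <;> obtain ⟨k, -, hk⟩ := mem_image.1 hz
  exacts [Or.inl ⟨k, hk⟩, Or.inr ⟨k, hk⟩]

theorem stationaryEq_prodForm {m K : ℕ} {y y' : Fin K → Fin m → ℕ} {κ : Fin K → ℝ}
    {c : Fin m → ℝ} {θ : Fin m → ℤ → ℝ}
    (hθ0 : ∀ i, ∀ x : ℤ, x ≤ 0 → θ i x = 0) (hθpos : ∀ i, ∀ j : ℤ, 1 ≤ j → 0 < θ i j)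
    (hcb : complexBalanced m K y y' κ c) :
    stationaryEq m K y y' (prodForm m c θ) (genIntensity m K y κ θ) := by
  intro x
  simp only [mul_sum, prodForm_mul_genIntensity y κ c hθ0 hθpos, add_sub_cancel_right]
  exact hcb.sum_mul_product_eq_sum_mul_source fun z => prodForm m c θ fun i => (x i : ℤ) - z i

theorem stationaryEq.div_const {m K : ℕ} {y y' : Fin K → Fin m → ℕ}
    {μ : (Fin m → ℤ) → ℝ} {lam : Fin K → (Fin m → ℤ) → ℝ}
    (h : stationaryEq m K y y' μ lam) (Z : ℝ) :
    stationaryEq m K y y' (fun ξ => μ ξ / Z) lam := by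
  intro x
  simp only [div_mul_eq_mul_div, ← sum_div, h x]

theorem prodForm_natCast (m : ℕ) (c : Fin m → ℝ) (θ : Fin m → ℤ → ℝ) (x : Fin m → ℕ) :
    prodForm m c θ (fun i => (x i : ℤ)) = ∏ i, c i ^ x i / ∏ j ∈ range (x i), θ i (j + 1) := by
  simp only [prodForm, Int.natCast_nonneg, implies_true, if_true, Int.toNat_natCast]

theorem prodForm_natCast_pos {m : ℕ} {c : Fin m → ℝ} {θ : Fin m → ℤ → ℝ}
    (hc : ∀ i, 0 < c i) (hθpos : ∀ i, ∀ j : ℤ, 1 ≤ j → 0 < θ i j) (x : Fin m → ℕ) :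
    0 < prodForm m c θ (fun i => (x i : ℤ)) := by
  rw [prodForm_natCast]
  exact prod_pos fun i _ =>
    div_pos (pow_pos (hc i) _) (prod_pos fun j _ => hθpos i _ (by omega))

theorem summable_prodForm {m : ℕ} {c : Fin m → ℝ} {θ : Fin m → ℤ → ℝ}
    (hc : ∀ i, 0 < c i) (hθpos : ∀ i, ∀ j : ℤ, 1 ≤ j → 0 < θ i j)
    (hθlim : ∀ i, Tendsto (θ i) atTop atTop) :
    Summable (fun x : Fin m → ℕ => prodForm m c θ (fun i => (x i : ℤ))) := by
  simp only [prodForm_natCast]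
  refine summable_fintype_prod_of_nonneg (fun i n => c i ^ n / ∏ j ∈ range n, θ i (j + 1))
    (fun i n => ?_) fun i => summable_pow_div_prod_range_of_tendsto_atTop (c i) ?_
  · exact div_nonneg (pow_nonneg (hc i).le n) (prod_nonneg fun j _ => (hθpos i _ (by omega)).le)
  · exact (hθlim i).comp (tendsto_atTop_add_const_right _ 1 tendsto_natCast_atTop_atTop)

theorem stmt2_general (m K : ℕ) (y y' : Fin K → Fin m → ℕ) (κ : Fin K → ℝ)
    (c : Fin m → ℝ) (θ : Fin m → ℤ → ℝ)
    (hc : ∀ i, 0 < c i)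
    (hθ0 : ∀ i, ∀ x : ℤ, x ≤ 0 → θ i x = 0)
    (hθpos : ∀ i, ∀ j : ℤ, 1 ≤ j → 0 < θ i j)
    (hθlim : ∀ i, Filter.Tendsto (θ i) Filter.atTop Filter.atTop)
    (hcb : complexBalanced m K y y' κ c) :
    Summable (fun x : Fin m → ℕ => prodForm m c θ (fun i => (x i : ℤ))) ∧
    (∑' x : Fin m → ℕ,
        prodForm m c θ (fun i => (x i : ℤ)) /
          (∑' x' : Fin m → ℕ, prodForm m c θ (fun i => (x' i : ℤ)))) = 1 ∧
    stationaryEq m K y y'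
      (fun ξ => prodForm m c θ ξ /
        (∑' x' : Fin m → ℕ, prodForm m c θ (fun i => (x' i : ℤ))))
      (genIntensity m K y κ θ) := by
  have hsum := summable_prodForm hc hθpos hθlim
  have hZ : 0 < ∑' x : Fin m → ℕ, prodForm m c θ (fun i => (x i : ℤ)) :=
    hsum.tsum_pos (fun x => (prodForm_natCast_pos hc hθpos x).le) 0
      (prodForm_natCast_pos hc hθpos 0)
  refine ⟨hsum, ?_, (stationaryEq_prodForm hθ0 hθpos hcb).div_const _⟩
  rw [tsum_div_const, div_self hZ.ne']

/-- If `c` is a complex balanced equilibrium and each `θ_i → ∞`,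
then the product-form measure `π_c` is summable, and the normalized measure `π_c / Z`
is a stationary distribution (total mass one, satisfying the stationarity equation). -/
theorem stmt2 (m K : ℕ) (y y' : Fin K → Fin m → ℕ) (κ : Fin K → ℝ)
    (c : Fin m → ℝ) (θ : Fin m → ℤ → ℝ)
    (hyy' : ∀ k, y k ≠ y' k) (hκ : ∀ k, 0 < κ k) (hc : ∀ i, 0 < c i)
    (hθnn : ∀ i x, 0 ≤ θ i x)
    (hθ0 : ∀ i, ∀ x : ℤ, x ≤ 0 → θ i x = 0)
    (hθpos : ∀ i, ∀ j : ℤ, 1 ≤ j → 0 < θ i j)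
    (hθlim : ∀ i, Filter.Tendsto (θ i) Filter.atTop Filter.atTop)
    (hcb : complexBalanced m K y y' κ c) :
    Summable (fun x : Fin m → ℕ => prodForm m c θ (fun i => (x i : ℤ))) ∧
    (∑' x : Fin m → ℕ,
        prodForm m c θ (fun i => (x i : ℤ)) /
          (∑' x' : Fin m → ℕ, prodForm m c θ (fun i => (x' i : ℤ)))) = 1 ∧
    stationaryEq m K y y'
      (fun ξ => prodForm m c θ ξ /
        (∑' x' : Fin m → ℕ, prodForm m c θ (fun i => (x' i : ℤ))))
      (genIntensity m K y κ θ) :=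
  stmt2_general m K y y' κ c θ hc hθ0 hθpos hθlim hcb
end

section
/- Suppose c ∈ ℝ^m_{>0} is a complex balanced equilibrium of a reaction network with rate constants κ_k. For V > 0 define scaled rate constants κ_k^V = κ_k / V^{|y_k| − 1}, where |y_k| = ∑_i y_{ki}, and scaled mass action intensities λ_k^V(x) = κ_k^V ∏_{i=1}^m x_i!/(x_i − y_{ki})! (for x_i ≥ y_{ki} for all i, and 0 otherwise). Then π^V(x) = ∏_{i=1}^m e^{−V c_i} (V c_i)^{x_i}/x_i! is a stationary distribution: for every x ∈ ℤ^m_{≥0}, ∑_{k=1}^K π^V(x − y_k' + y_k) λ_k^V(x − y_k' + y_k) = π^V(x) ∑_{k=1}^K λ_k^V(x), and ∑_{x ∈ ℤ^m_{≥0}} π^V(x) = 1. -/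
open Finset Filter

/-- Stochastic mass action intensity:
`λ_k(x) = κ_k ∏_i x_i!/(x_i - y_{ki})!` when `x_i ≥ y_{ki}` for all `i`, else `0`. -/
noncomputable def maIntensity (m K : ℕ) (y : Fin K → Fin m → ℕ) (κ : Fin K → ℝ)
    (k : Fin K) (x : Fin m → ℤ) : ℝ :=
  if ∀ i, (y k i : ℤ) ≤ x i then
    κ k * ∏ i, ((x i).toNat.factorial : ℝ) / (((x i).toNat - y k i).factorial : ℝ)
  else 0

/-- Product of Poisson distributions with parameter vector `c`, extended by `0`
outside `ℤ^m_{≥0}`. -/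
noncomputable def poissonPi (m : ℕ) (c : Fin m → ℝ) (x : Fin m → ℤ) : ℝ :=
  if ∀ i, 0 ≤ x i then
    ∏ i, Real.exp (-c i) * c i ^ (x i).toNat / ((x i).toNat.factorial : ℝ)
  else 0

/-!
Multiplying the Poisson weight by the mass-action intensity cancels the factorials:
`π_c(x) λ_k(x) = κ_k c^{y_k} π_c(x - y_k)`. Hence at `x` the inflow through reaction `k` is
`κ_k c^{y_k} π_c(x - y_k')`, the outflow `κ_k c^{y_k} π_c(x - y_k)`, and after grouping the
reactions by the complex `z = y_k'`, resp. `z = y_k`, stationarity at `x` is exactly complex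
balance at every `z`. The rescaling `c ↦ V c`, `κ_k ↦ κ_k / V^{|y_k| - 1}` multiplies every
`κ_k c^{y_k}` by `V`, so it preserves complex balance. The total mass is a product of Poisson
masses.
-/

theorem Finset.sum_mul_comp_eq_sum_fiber {ι α R : Type*} [Fintype ι] [DecidableEq α]
    [CommSemiring R] (g : ι → α) (w : ι → R) (f : α → R) {S : Finset α}
    (hS : ∀ k, g k ∈ S) :
    ∑ k, w k * f (g k) = ∑ z ∈ S, (∑ k ∈ univ.filter (fun k => g k = z), w k) * f z := by
  rw [← sum_fiberwise_of_maps_to (fun k _ => hS k)]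
  refine sum_congr rfl fun z _ => ?_
  rw [sum_mul]
  exact sum_congr rfl fun k hk => by rw [(mem_filter.1 hk).2]

theorem Finset.sum_mul_comp_eq_of_fiber_sum_eq {ι α R : Type*} [Fintype ι] [DecidableEq α]
    [CommSemiring R] (g g' : ι → α) (w : ι → R) (f : α → R)
    (h : ∀ z, ∑ k ∈ univ.filter (fun k => g' k = z), w k =
      ∑ k ∈ univ.filter (fun k => g k = z), w k) :
    ∑ k, w k * f (g' k) = ∑ k, w k * f (g k) := by
  classical
  let S := univ.image g ∪ univ.image g'
  rw [sum_mul_comp_eq_sum_fiber g' w f (S := S) (fun k => by simp [S]),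
    sum_mul_comp_eq_sum_fiber g w f (S := S) (fun k => by simp [S])]
  simp only [h]

theorem complexBalanced.fiber_sum_eq {m K : ℕ} {y y' : Fin K → Fin m → ℕ} {κ : Fin K → ℝ}
    {c : Fin m → ℝ} (hcb : complexBalanced m K y y' κ c) (z : Fin m → ℕ) :
    ∑ k ∈ univ.filter (fun k => y' k = z), κ k * ∏ i, c i ^ y k i =
      ∑ k ∈ univ.filter (fun k => y k = z), κ k * ∏ i, c i ^ y k i := by
  by_cases hz : (∃ k, y k = z) ∨ (∃ k, y' k = z)
  · exact hcb z hz
  · push Not at hz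
    rw [filter_false_of_mem fun k _ => hz.2 k, filter_false_of_mem fun k _ => hz.1 k]

theorem complexBalanced.rescale {m K : ℕ} {y y' : Fin K → Fin m → ℕ} {κ : Fin K → ℝ}
    {c : Fin m → ℝ} (hcb : complexBalanced m K y y' κ c) {V : ℝ} (hV : V ≠ 0) :
    complexBalanced m K y y' (fun k => κ k / V ^ (((∑ i, y k i : ℕ) : ℤ) - 1))
      (fun i => V * c i) := by
  have hterm : ∀ k, κ k / V ^ (((∑ i, y k i : ℕ) : ℤ) - 1) * ∏ i, (V * c i) ^ y k i =
      V * (κ k * ∏ i, c i ^ y k i) := fun k => by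
    simp only [mul_pow, prod_mul_distrib, prod_pow_eq_pow_sum, zpow_sub₀ hV, zpow_one,
      zpow_natCast]
    field_simp
  intro z hz
  simp only [hterm, ← mul_sum, hcb z hz]

theorem poissonTerm_mul_factorial_div {a n : ℕ} (c : ℝ) (h : a ≤ n) :
    Real.exp (-c) * c ^ n / n.factorial * (n.factorial / (n - a).factorial) =
      c ^ a * (Real.exp (-c) * c ^ (n - a) / (n - a).factorial) := by
  obtain ⟨n, rfl⟩ := Nat.exists_eq_add_of_le h
  rw [Nat.add_sub_cancel_left, pow_add]
  field_simp

theorem poissonPi_mul_maIntensity {m K : ℕ} (y : Fin K → Fin m → ℕ) (κ : Fin K → ℝ)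
    (c : Fin m → ℝ) (k : Fin K) (x : Fin m → ℤ) :
    poissonPi m c x * maIntensity m K y κ k x =
      κ k * (∏ i, c i ^ y k i) * poissonPi m c (fun i => x i - y k i) := by
  by_cases h : ∀ i, (y k i : ℤ) ≤ x i
  · have hx : ∀ i, 0 ≤ x i := fun i => (Int.natCast_nonneg _).trans (h i)
    have hle : ∀ i, y k i ≤ (x i).toNat := fun i => by have := h i; omega
    have hsub : ∀ i, (x i - y k i).toNat = (x i).toNat - y k i := fun i => by
      have := h i; omega
    rw [poissonPi, if_pos hx, maIntensity, if_pos h, poissonPi,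
      if_pos fun i => sub_nonneg.2 (h i), mul_left_comm, ← prod_mul_distrib,
      prod_congr rfl fun i _ => poissonTerm_mul_factorial_div (c i) (hle i),
      prod_mul_distrib, mul_assoc]
    simp only [hsub]
  · obtain ⟨i, hi⟩ := not_forall.1 h
    have hzero : poissonPi m c (fun i => x i - y k i) = 0 :=
      if_neg fun hx => by have := hx i; simp only at this; omega
    rw [maIntensity, if_neg h, hzero]
    ring

theorem complexBalanced.stationaryEq_poissonPi {m K : ℕ} {y y' : Fin K → Fin m → ℕ}
    {κ : Fin K → ℝ} {c : Fin m → ℝ} (hcb : complexBalanced m K y y' κ c) :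
    stationaryEq m K y y' (poissonPi m c) (maIntensity m K y κ) := by
  intro x
  simp only [poissonPi_mul_maIntensity, mul_sum, add_sub_cancel_right]
  exact sum_mul_comp_eq_of_fiber_sum_eq y y' (fun k => κ k * ∏ i, c i ^ y k i)
    (fun z => poissonPi m c fun i => (x i : ℤ) - z i) hcb.fiber_sum_eq

theorem hasSum_prod_of_nonneg {n : ℕ} {β : Fin n → Type*} (f : (i : Fin n) → β i → ℝ)
    (a : Fin n → ℝ) (hf : ∀ i b, 0 ≤ f i b) (ha : ∀ i, HasSum (f i) (a i)) :
    HasSum (fun x : (i : Fin n) → β i => ∏ i, f i (x i)) (∏ i, a i) := by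
  induction n with
  | zero => simp
  | succ n ih =>
    have htail := ih (fun i => f i.succ) (fun i => a i.succ) (fun i => hf i.succ)
      fun i => ha i.succ
    have hhead := ha 0
    have hhead_nonneg : 0 ≤ f 0 := hf 0
    have htail_nonneg : 0 ≤ fun x : (i : Fin n) → β i.succ => ∏ i, f i.succ (x i) :=
      fun x => prod_nonneg fun i _ => hf i.succ (x i)
    have hsummable := hhead.summable.mul_of_nonneg htail.summable hhead_nonneg htail_nonneg
    rw [Fin.prod_univ_succ, ← (Fin.consEquiv β).hasSum_iff]
    simpa [Function.comp_def, Fin.prod_univ_succ] using hhead.mul htail hsummable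

theorem hasSum_poissonPi {m : ℕ} {c : Fin m → ℝ} (hc : ∀ i, 0 ≤ c i) :
    HasSum (fun x : Fin m → ℕ => poissonPi m c fun i => (x i : ℤ)) 1 := by
  have hpmf : ∀ i, HasSum (fun n : ℕ => Real.exp (-c i) * c i ^ n / n.factorial) 1 :=
    fun i => ProbabilityTheory.hasSum_one_poissonMeasure ⟨c i, hc i⟩
  have hprod := hasSum_prod_of_nonneg _ _ (fun i n => by have := hc i; positivity) hpmf
  rw [prod_const_one] at hprod
  convert hprod using 2 with x
  rw [poissonPi, if_pos fun i => Int.natCast_nonneg _]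
  simp only [Int.toNat_natCast]

theorem stmt9_general (m K : ℕ) (y y' : Fin K → Fin m → ℕ) (κ : Fin K → ℝ) (c : Fin m → ℝ)
    (hc : ∀ i, 0 < c i)
    (hcb : complexBalanced m K y y' κ c)
    (V : ℝ) (hV : 0 < V) :
    stationaryEq m K y y' (poissonPi m (fun i => V * c i))
      (maIntensity m K y (fun k => κ k / V ^ (((∑ i, y k i : ℕ) : ℤ) - 1))) ∧
      ∑' x : Fin m → ℕ, poissonPi m (fun i => V * c i) (fun i => (x i : ℤ)) = 1 :=
  ⟨(hcb.rescale hV.ne').stationaryEq_poissonPi,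
    (hasSum_poissonPi fun i => (mul_pos hV (hc i)).le).tsum_eq⟩

/-- (Classical scaling.) If `c` is a complex balanced equilibrium,
then for every `V > 0` the product of Poissons with parameter `V c` is a stationary
distribution for the mass action model with scaled rate constants
`κ_k^V = κ_k / V^{|y_k| - 1}`, and it has total mass `1`. -/
theorem stmt9 (m K : ℕ) (y y' : Fin K → Fin m → ℕ) (κ : Fin K → ℝ) (c : Fin m → ℝ)
    (hyy' : ∀ k, y k ≠ y' k) (hκ : ∀ k, 0 < κ k) (hc : ∀ i, 0 < c i)
    (hcb : complexBalanced m K y y' κ c)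
    (V : ℝ) (hV : 0 < V) :
    stationaryEq m K y y' (poissonPi m (fun i => V * c i))
      (maIntensity m K y (fun k => κ k / V ^ (((∑ i, y k i : ℕ) : ℤ) - 1))) ∧
      ∑' x : Fin m → ℕ, poissonPi m (fun i => V * c i) (fun i => (x i : ℤ)) = 1 :=
  stmt9_general m K y y' κ c hc hcb V hV
end

section
/- Let d, A ∈ ℝ^m_{>0}, let θ_i : ℤ → ℝ_{≥0} satisfy θ_i(x) = 0 for x ≤ 0, θ_i(j) > 0 for all integers j ≥ 1, and lim_{x→∞} θ_i(x)/x^{d_i} = A_i, and let c ∈ ℝ^m_{>0}. Then for all sufficiently large V > 0 both sums below are finite, and lim_{V→∞} [ (1/V) ln( ∑_{x ∈ ℤ^m_{≥0}} ∏_{i=1}^m (V^{d_i} c_i)^{x_i} / ∏_{j=1}^{x_i} θ_i(j) ) − (1/V) ln( ∑_{x ∈ ℤ^m_{≥0}} ∏_{i=1}^m (V^{d_i} c_i A_i^{−1})^{x_i}/(x_i!)^{d_i} ) ] = 0. -/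
/-!
Write `Z_d(l) = ∑ₓ lˣ / (x!)^d`. With `L = l^{1/d}` its terms are `(Lˣ / x!)^d`. Since
`Lˣ / x! ≤ e^L`, while for every `q > 1` some `Lˣ / x!` exceeds `(1 - q⁻¹) e^{L/q}` (otherwise
`e^{L/q} = ∑ₓ q⁻ˣ Lˣ / x!` would be smaller than itself), one gets
`(1 - q⁻¹)^d e^{d L / q} ≤ Z_d(l) ≤ (1 - q⁻¹)⁻¹ e^{d (q l)^{1/d}}`.

Since `θ(j) / j^d → A`, for every `s > 1` the products `∏_{j ≤ x} θ(j)` lie between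
`C⁻¹ (A/s)ˣ (x!)^d` and `C (s A)ˣ (x!)^d`, so the one-dimensional θ-sum at `l = V^d c` is squeezed
between multiples of model sums; letting `s, q → 1` shows that `V⁻¹ log` of it tends to
`d (c/A)^{1/d}`. Both sums of the theorem factor into products of one-dimensional sums, the
model sum being the θ-sum for `θ(j) = A j^d`, so their scaled logarithms have the same limit.
-/

open Finset Filter

open Real Topology
open scoped Nat

noncomputable def factorialRpowSeries (d l : ℝ) : ℝ := ∑' x : ℕ, l ^ x / (x ! : ℝ) ^ d

lemma pow_div_factorial_rpow_eq {d l : ℝ} (hd : d ≠ 0) (hl : 0 ≤ l) (x : ℕ) :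
    l ^ x / (x ! : ℝ) ^ d = ((l ^ (1 / d)) ^ x / x !) ^ d := by
  rw [div_rpow (by positivity) (by positivity), ← rpow_natCast, ← rpow_natCast (l ^ (1 / d)),
    ← rpow_mul hl, ← rpow_mul hl]
  field_simp

lemma exists_mul_exp_div_le_pow_div_factorial {q : ℝ} (L : ℝ) (hq : 1 < q) :
    ∃ x : ℕ, (1 - q⁻¹) * exp (L / q) ≤ L ^ x / x ! := by
  by_contra! h
  have hq₀ : 0 < q⁻¹ := by positivity
  have hgeom : HasSum (fun x : ℕ => q⁻¹ ^ x * ((1 - q⁻¹) * exp (L / q))) (exp (L / q)) := by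
    have h₀ : 1 - q⁻¹ ≠ 0 := by linarith [inv_lt_one_of_one_lt₀ hq]
    simpa only [inv_mul_cancel_left₀ h₀] using
      (hasSum_geometric_of_lt_one hq₀.le (inv_lt_one_of_one_lt₀ hq)).mul_right
        ((1 - q⁻¹) * exp (L / q))
  have hexp : HasSum (fun x : ℕ => q⁻¹ ^ x * (L ^ x / x !)) (exp (L / q)) := by
    have hseries : (fun x : ℕ => q⁻¹ ^ x * (L ^ x / x !)) = fun x => (L / q) ^ x / x ! := by
      funext x; rw [div_pow, inv_pow]; ring
    rw [hseries, exp_eq_exp_ℝ]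
    exact NormedSpace.expSeries_div_hasSum_exp (L / q)
  exact (hasSum_lt (fun x => mul_le_mul_of_nonneg_left (h x).le (by positivity))
    (mul_lt_mul_of_pos_left (h 0) (by positivity)) hexp hgeom).false

lemma pow_div_factorial_rpow_le_exp {d l : ℝ} (hd : 0 < d) (hl : 0 ≤ l) (x : ℕ) :
    l ^ x / (x ! : ℝ) ^ d ≤ exp (d * l ^ (1 / d)) := by
  rw [pow_div_factorial_rpow_eq hd.ne' hl, mul_comm, exp_mul]
  exact rpow_le_rpow (by positivity) (pow_div_factorial_le_exp _ (by positivity) x) hd.le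

lemma pow_div_factorial_rpow_le_geometric {d l q : ℝ} (hd : 0 < d) (hl : 0 ≤ l) (hq : 0 < q)
    (x : ℕ) : l ^ x / (x ! : ℝ) ^ d ≤ exp (d * (q * l) ^ (1 / d)) * q⁻¹ ^ x := by
  calc l ^ x / (x ! : ℝ) ^ d = (q * l) ^ x / (x ! : ℝ) ^ d * q⁻¹ ^ x := by
        rw [mul_pow, inv_pow]; field_simp
    _ ≤ _ := by
        gcongr
        exact pow_div_factorial_rpow_le_exp hd (by positivity) x

lemma summable_pow_div_factorial_rpow {d l : ℝ} (hd : 0 < d) (hl : 0 ≤ l) :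
    Summable (fun x : ℕ => l ^ x / (x ! : ℝ) ^ d) :=
  Summable.of_nonneg_of_le (fun x => by positivity)
    (pow_div_factorial_rpow_le_geometric hd hl two_pos)
    ((summable_geometric_of_lt_one (by norm_num) (by norm_num)).mul_left _)

lemma factorialRpowSeries_le {d l q : ℝ} (hd : 0 < d) (hl : 0 ≤ l) (hq : 1 < q) :
    factorialRpowSeries d l ≤ (1 - q⁻¹)⁻¹ * exp (d * (q * l) ^ (1 / d)) := by
  have hq₀ : 0 < q⁻¹ := by positivity
  calc factorialRpowSeries d l ≤ ∑' x : ℕ, exp (d * (q * l) ^ (1 / d)) * q⁻¹ ^ x :=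
        (summable_pow_div_factorial_rpow hd hl).tsum_le_tsum
          (pow_div_factorial_rpow_le_geometric hd hl (by positivity))
          ((summable_geometric_of_lt_one hq₀.le (inv_lt_one_of_one_lt₀ hq)).mul_left _)
    _ = _ := by
        rw [tsum_mul_left, tsum_geometric_of_lt_one hq₀.le (inv_lt_one_of_one_lt₀ hq), mul_comm]

lemma le_factorialRpowSeries {d l q : ℝ} (hd : 0 < d) (hl : 0 ≤ l) (hq : 1 < q) :
    (1 - q⁻¹) ^ d * exp (d * l ^ (1 / d) / q) ≤ factorialRpowSeries d l := by
  obtain ⟨x, hx⟩ := exists_mul_exp_div_le_pow_div_factorial (l ^ (1 / d)) hq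
  have hq' : 0 ≤ 1 - q⁻¹ := by linarith [inv_lt_one_of_one_lt₀ hq]
  calc (1 - q⁻¹) ^ d * exp (d * l ^ (1 / d) / q) = ((1 - q⁻¹) * exp (l ^ (1 / d) / q)) ^ d := by
        rw [mul_rpow hq' (exp_pos _).le, ← exp_mul]; ring_nf
    _ ≤ ((l ^ (1 / d)) ^ x / x !) ^ d := rpow_le_rpow (by positivity) hx hd.le
    _ = l ^ x / (x ! : ℝ) ^ d := (pow_div_factorial_rpow_eq hd.ne' hl x).symm
    _ ≤ factorialRpowSeries d l :=
        (summable_pow_div_factorial_rpow hd hl).le_tsum x (fun _ _ => by positivity)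

lemma inv_mul_log_mul_exp {K V : ℝ} (hK : 0 < K) (hV : 0 < V) (r : ℝ) :
    1 / V * log (K * exp (r * V)) = r + log K / V := by
  rw [log_mul hK.ne' (exp_pos _).ne', log_exp]
  field_simp
  ring

lemma tendsto_inv_mul_log_of_exp_bounds {ι : Type*} {l : Filter ι} [l.NeBot] {Z : ℝ → ℝ}
    {L : ℝ} {lo hi : ι → ℝ} (hlo : Tendsto lo l (𝓝 L)) (hhi : Tendsto hi l (𝓝 L))
    (hZ : ∀ᶠ t in l, ∃ K₁ > 0, ∃ K₂ > 0, ∀ V, 0 < V →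
      K₁ * exp (lo t * V) ≤ Z V ∧ Z V ≤ K₂ * exp (hi t * V)) :
    Tendsto (fun V => 1 / V * log (Z V)) atTop (𝓝 L) := by
  have hshift (r K : ℝ) : Tendsto (fun V => r + log K / V) atTop (𝓝 r) := by
    simpa using (tendsto_const_nhds (x := r)).add
      ((tendsto_const_nhds (x := log K)).div_atTop (tendsto_id (α := ℝ)))
  rw [tendsto_order]
  constructor
  · intro a ha
    obtain ⟨t, hta, K₁, hK₁, K₂, hK₂, hb⟩ := ((hlo.eventually (lt_mem_nhds ha)).and hZ).exists
    filter_upwards [(hshift (lo t) K₁).eventually (lt_mem_nhds hta), eventually_gt_atTop 0]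
      with V haV hV
    refine haV.trans_le ?_
    rw [← inv_mul_log_mul_exp hK₁ hV]
    exact mul_le_mul_of_nonneg_left (log_le_log (by positivity) (hb V hV).1) (by positivity)
  · intro a ha
    obtain ⟨t, hta, K₁, hK₁, K₂, hK₂, hb⟩ := ((hhi.eventually (gt_mem_nhds ha)).and hZ).exists
    filter_upwards [(hshift (hi t) K₂).eventually (gt_mem_nhds hta), eventually_gt_atTop 0]
      with V haV hV
    refine lt_of_le_of_lt ?_ haV
    rw [← inv_mul_log_mul_exp hK₂ hV]
    have hZV : 0 < Z V := lt_of_lt_of_le (by positivity) (hb V hV).1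
    exact mul_le_mul_of_nonneg_left (log_le_log hZV (hb V hV).2) (by positivity)

lemma exists_prod_range_le_mul_prod_range {u v : ℕ → ℝ} (hu : ∀ j, 0 ≤ u j) (hv : ∀ j, 0 < v j)
    (h : ∀ᶠ j in atTop, u j ≤ v j) :
    ∃ C > 0, ∀ x, ∏ j ∈ range x, u j ≤ C * ∏ j ∈ range x, v j := by
  obtain ⟨N, hN⟩ := eventually_atTop.1 h
  set r : ℕ → ℝ := fun j => u j / v j
  refine ⟨∏ j ∈ range N, max (r j) 1, prod_pos fun j _ => by positivity, fun x => ?_⟩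
  have hr : ∀ j, 0 ≤ r j := fun j => div_nonneg (hu j) (hv j).le
  have hprod : ∏ j ∈ range x, u j = (∏ j ∈ range x, r j) * ∏ j ∈ range x, v j := by
    rw [← prod_mul_distrib]
    exact prod_congr rfl fun j _ => (div_mul_cancel₀ _ (hv j).ne').symm
  rw [hprod]
  refine mul_le_mul_of_nonneg_right ?_ (prod_nonneg fun j _ => (hv j).le)
  rcases le_total x N with hxN | hNx
  · calc ∏ j ∈ range x, r j ≤ ∏ j ∈ range x, max (r j) 1 :=
          prod_le_prod (fun j _ => hr j) fun j _ => le_max_left _ _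
      _ ≤ ∏ j ∈ range N, max (r j) 1 :=
          prod_le_prod_of_subset_of_one_le (range_subset_range.2 hxN)
            (fun j _ => by positivity) fun j _ _ => le_max_right _ _
  · rw [← prod_range_mul_prod_Ico r hNx]
    calc (∏ j ∈ range N, r j) * ∏ j ∈ Ico N x, r j ≤ (∏ j ∈ range N, max (r j) 1) * 1 := by
          refine mul_le_mul (prod_le_prod (fun j _ => hr j) fun j _ => le_max_left _ _)
            ?_ (prod_nonneg fun j _ => hr j) (prod_nonneg fun j _ => by positivity)
          exact prod_le_one (fun j _ => hr j) fun j hj =>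
            (div_le_one (hv j)).2 (hN j (mem_Ico.1 hj).1)
      _ = _ := mul_one _

lemma prod_range_mul_succ_rpow (a : ℝ) {d : ℝ} (x : ℕ) :
    ∏ j ∈ range x, (a * ((j : ℝ) + 1) ^ d) = a ^ x * (x ! : ℝ) ^ d := by
  rw [prod_mul_distrib, prod_const, card_range,
    Real.finsetProd_rpow _ _ (fun j _ => by positivity), ← prod_range_add_one_eq_factorial]
  push_cast
  rfl

lemma rpow_mul_rpow_one_div {V b d : ℝ} (hV : 0 ≤ V) (hb : 0 ≤ b) (hd : d ≠ 0) :
    (V ^ d * b) ^ (1 / d) = V * b ^ (1 / d) := by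
  rw [mul_rpow (by positivity) hb, one_div, rpow_rpow_inv hV hd]

section SingleCoordinate

variable {p : ℕ → ℝ} {d A : ℝ}

lemma exists_prod_range_le_of_tendsto (hp : ∀ j, 0 < p j)
    (hpA : Tendsto (fun j : ℕ => p j / ((j : ℝ) + 1) ^ d) atTop (𝓝 A)) {a : ℝ} (ha : A < a) :
    ∃ C > 0, ∀ x, ∏ j ∈ range x, p j ≤ C * (a ^ x * (x ! : ℝ) ^ d) := by
  have hA : 0 ≤ A := ge_of_tendsto' hpA fun j => (div_pos (hp j) (by positivity)).le
  simp_rw [← prod_range_mul_succ_rpow]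
  refine exists_prod_range_le_mul_prod_range (fun j => (hp j).le) (fun j => by
    have := hA.trans_lt ha; positivity) ?_
  filter_upwards [hpA.eventually (gt_mem_nhds ha)] with j hj
  exact ((div_lt_iff₀ (by positivity)).1 hj).le

lemma exists_le_prod_range_of_tendsto (hp : ∀ j, 0 < p j)
    (hpA : Tendsto (fun j : ℕ => p j / ((j : ℝ) + 1) ^ d) atTop (𝓝 A)) {a : ℝ} (ha₀ : 0 ≤ a)
    (ha : a < A) : ∃ C > 0, ∀ x, a ^ x * (x ! : ℝ) ^ d ≤ C * ∏ j ∈ range x, p j := by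
  simp_rw [← prod_range_mul_succ_rpow]
  refine exists_prod_range_le_mul_prod_range (fun j => by positivity) hp ?_
  filter_upwards [hpA.eventually (lt_mem_nhds ha)] with j hj
  exact ((lt_div_iff₀ (by positivity)).1 hj).le

lemma div_le_mul_div_of_le_mul {y P Q C : ℝ} (hy : 0 ≤ y) (hP : 0 < P) (hQ : 0 < Q)
    (h : Q ≤ C * P) : y / P ≤ C * (y / Q) := by
  rw [mul_div_assoc', div_le_div_iff₀ hP hQ]
  nlinarith [mul_le_mul_of_nonneg_left h hy]

lemma pow_div_prod_range_le (hp : ∀ j, 0 < p j) {a C l : ℝ} (ha : 0 < a) (hl : 0 ≤ l)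
    (hC : ∀ x, a ^ x * (x ! : ℝ) ^ d ≤ C * ∏ j ∈ range x, p j) (x : ℕ) :
    l ^ x / ∏ j ∈ range x, p j ≤ C * ((l / a) ^ x / (x ! : ℝ) ^ d) := by
  rw [div_pow, div_div]
  exact div_le_mul_div_of_le_mul (by positivity) (prod_pos fun j _ => hp j) (by positivity) (hC x)

variable (hp : ∀ j, 0 < p j) (hpA : Tendsto (fun j : ℕ => p j / ((j : ℝ) + 1) ^ d) atTop (𝓝 A))
  (hd : 0 < d) (hA : 0 < A)
include hp hpA hd hA

lemma summable_pow_div_prod_range {l : ℝ} (hl : 0 ≤ l) :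
    Summable (fun x : ℕ => l ^ x / ∏ j ∈ range x, p j) := by
  obtain ⟨C, -, hC⟩ := exists_le_prod_range_of_tendsto hp hpA (half_pos hA).le (half_lt_self hA)
  exact Summable.of_nonneg_of_le (fun x => div_nonneg (by positivity) (prod_pos fun j _ => hp j).le)
    (pow_div_prod_range_le hp (half_pos hA) hl hC)
    ((summable_pow_div_factorial_rpow hd (by positivity)).mul_left C)

lemma exists_tsum_pow_div_prod_range_le {s : ℝ} (hs : 1 < s) :
    ∃ C > 0, ∀ l, 0 ≤ l →
      ∑' x : ℕ, l ^ x / ∏ j ∈ range x, p j ≤ C * factorialRpowSeries d (l * s / A) := by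
  have ha : 0 < A / s := by positivity
  obtain ⟨C, hC₀, hC⟩ := exists_le_prod_range_of_tendsto hp hpA ha.le (div_lt_self hA hs)
  refine ⟨C, hC₀, fun l hl => ?_⟩
  rw [factorialRpowSeries, ← div_div_eq_mul_div, ← tsum_mul_left]
  exact (summable_pow_div_prod_range hp hpA hd hA hl).tsum_le_tsum
    (pow_div_prod_range_le hp ha hl hC)
    ((summable_pow_div_factorial_rpow hd (by positivity)).mul_left C)

lemma exists_le_tsum_pow_div_prod_range {s : ℝ} (hs : 1 < s) :
    ∃ C > 0, ∀ l, 0 ≤ l →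
      factorialRpowSeries d (l / (s * A)) ≤ C * ∑' x : ℕ, l ^ x / ∏ j ∈ range x, p j := by
  have ha : 0 < s * A := by positivity
  obtain ⟨C, hC₀, hC⟩ := exists_prod_range_le_of_tendsto hp hpA (lt_mul_of_one_lt_left hA hs)
  refine ⟨C, hC₀, fun l hl => ?_⟩
  rw [factorialRpowSeries, ← tsum_mul_left]
  refine (summable_pow_div_factorial_rpow hd (by positivity)).tsum_le_tsum (fun x => ?_)
    ((summable_pow_div_prod_range hp hpA hd hA hl).mul_left C)
  rw [div_pow, div_div]
  exact div_le_mul_div_of_le_mul (by positivity) (by positivity)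
    (prod_pos fun j _ => hp j) (hC x)

theorem tendsto_inv_mul_log_tsum_pow_div_prod_range {c : ℝ} (hc : 0 < c) :
    Tendsto (fun V => 1 / V * log (∑' x : ℕ, (V ^ d * c) ^ x / ∏ j ∈ range x, p j)) atTop
      (𝓝 (d * (c / A) ^ (1 / d))) := by
  have hcont : ∀ f : ℝ → ℝ, ContinuousAt f 1 → f 1 = d * (c / A) ^ (1 / d) →
      Tendsto f (𝓝[>] 1) (𝓝 (d * (c / A) ^ (1 / d))) := fun f hf h1 =>
    h1 ▸ hf.tendsto.mono_left nhdsWithin_le_nhds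
  -- The comparison parameter `s` doubles as the parameter `q` of the model bounds.
  refine tendsto_inv_mul_log_of_exp_bounds (l := 𝓝[>] 1)
    (lo := fun s => d * (c / (s * A)) ^ (1 / d) / s) (hi := fun s => d * (s * s * c / A) ^ (1 / d))
    (hcont _ (by fun_prop (disch := positivity)) (by simp))
    (hcont _ (by fun_prop (disch := positivity)) (by simp)) ?_
  filter_upwards [self_mem_nhdsWithin] with s (hs : 1 < s)
  obtain ⟨C₁, hC₁, hup⟩ := exists_tsum_pow_div_prod_range_le hp hpA hd hA hs
  obtain ⟨C₂, hC₂, hlow⟩ := exists_le_tsum_pow_div_prod_range hp hpA hd hA hs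
  have hs' : 0 < 1 - s⁻¹ := by linarith [inv_lt_one_of_one_lt₀ hs]
  refine ⟨C₂⁻¹ * (1 - s⁻¹) ^ d, by positivity, C₁ * (1 - s⁻¹)⁻¹, by positivity,
    fun V hV => ⟨?_, ?_⟩⟩
  · rw [mul_assoc, inv_mul_le_iff₀ hC₂]
    calc (1 - s⁻¹) ^ d * exp (d * (c / (s * A)) ^ (1 / d) / s * V)
        = (1 - s⁻¹) ^ d * exp (d * (V ^ d * (c / (s * A))) ^ (1 / d) / s) := by
          rw [rpow_mul_rpow_one_div hV.le (by positivity) hd.ne']; ring_nf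
      _ ≤ factorialRpowSeries d (V ^ d * (c / (s * A))) :=
          le_factorialRpowSeries hd (by positivity) hs
      _ ≤ _ := by rw [← mul_div_assoc]; exact hlow _ (by positivity)
  · calc ∑' x : ℕ, (V ^ d * c) ^ x / ∏ j ∈ range x, p j
        ≤ C₁ * factorialRpowSeries d (V ^ d * c * s / A) := hup _ (by positivity)
      _ ≤ C₁ * ((1 - s⁻¹)⁻¹ * exp (d * (s * (V ^ d * c * s / A)) ^ (1 / d))) :=
          mul_le_mul_of_nonneg_left (factorialRpowSeries_le hd (by positivity) hs) hC₁.le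
      _ = _ := by
          rw [show s * (V ^ d * c * s / A) = V ^ d * (s * s * c / A) by ring,
            rpow_mul_rpow_one_div hV.le (by positivity) hd.ne']
          ring_nf

end SingleCoordinate

lemma hasSum_prod_fin {α : Type*} {m : ℕ} (f : Fin m → α → ℝ) (hf : ∀ i a, 0 ≤ f i a)
    (hs : ∀ i, Summable (f i)) :
    HasSum (fun x : Fin m → α => ∏ i, f i (x i)) (∏ i, ∑' a, f i a) := by
  induction m with
  | zero => simp
  | succ k ih =>
    have htail := ih (fun i => f i.succ) (fun i => hf i.succ) (fun i => hs i.succ)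
    have hsum : Summable fun y : α × (Fin k → α) => f 0 y.1 * ∏ i : Fin k, f i.succ (y.2 i) :=
      (hs 0).mul_of_nonneg (g := fun x : Fin k → α => ∏ i : Fin k, f i.succ (x i))
        htail.summable (hf 0) fun x => prod_nonneg fun i _ => hf i.succ (x i)
    have hpair := (hs 0).hasSum.mul htail hsum
    rw [Fin.prod_univ_succ, ← (Fin.consEquiv fun _ => α).hasSum_iff]
    simpa only [Function.comp_def, Fin.consEquiv_apply, Fin.prod_univ_succ, Fin.cons_zero,
      Fin.cons_succ] using hpair

section Product

variable {m : ℕ} {d A c : Fin m → ℝ} {p : Fin m → ℕ → ℝ} (hp : ∀ i j, 0 < p i j)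
  (hpA : ∀ i, Tendsto (fun j : ℕ => p i j / ((j : ℝ) + 1) ^ d i) atTop (𝓝 (A i)))
  (hd : ∀ i, 0 < d i) (hA : ∀ i, 0 < A i)
include hp hpA hd hA

lemma hasSum_prod_pow_div_prod_range {V : ℝ} (hV : 0 < V) (hc : ∀ i, 0 < c i) :
    HasSum (fun x : Fin m → ℕ => ∏ i, (V ^ d i * c i) ^ x i / ∏ j ∈ range (x i), p i j)
      (∏ i, ∑' n : ℕ, (V ^ d i * c i) ^ n / ∏ j ∈ range n, p i j) :=
  hasSum_prod_fin (fun i n => (V ^ d i * c i) ^ n / ∏ j ∈ range n, p i j)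
    (fun i n => div_nonneg (by have := hc i; positivity) (prod_pos fun j _ => hp i j).le)
    fun i => summable_pow_div_prod_range (hp i) (hpA i) (hd i) (hA i) (by have := hc i; positivity)

theorem tendsto_inv_mul_log_tsum_prod_pow_div_prod_range (hc : ∀ i, 0 < c i) :
    Tendsto (fun V => 1 / V * log (∑' x : Fin m → ℕ,
        ∏ i, (V ^ d i * c i) ^ x i / ∏ j ∈ range (x i), p i j))
      atTop (𝓝 (∑ i, d i * (c i / A i) ^ (1 / d i))) := by
  refine (tendsto_finsetSum _ fun i _ => tendsto_inv_mul_log_tsum_pow_div_prod_range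
    (hp i) (hpA i) (hd i) (hA i) (hc i)).congr' ?_
  filter_upwards [eventually_gt_atTop 0] with V hV
  have hpos : ∀ i, 0 < ∑' n : ℕ, (V ^ d i * c i) ^ n / ∏ j ∈ range n, p i j := fun i =>
    (summable_pow_div_prod_range (hp i) (hpA i) (hd i) (hA i)
      (by have := hc i; positivity)).tsum_pos
      (fun n => div_nonneg (by have := hc i; positivity) (prod_pos fun j _ => hp i j).le) 0
      (by simp)
  rw [(hasSum_prod_pow_div_prod_range hp hpA hd hA hV hc).tsum_eq,
    log_prod fun i _ => (hpos i).ne', mul_sum]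

end Product

theorem stmt16_general (m : ℕ) (d A c : Fin m → ℝ) (θ : Fin m → ℤ → ℝ)
    (hd : ∀ i, 0 < d i) (hA : ∀ i, 0 < A i) (hc : ∀ i, 0 < c i)
    (hθpos : ∀ i, ∀ j : ℤ, 1 ≤ j → 0 < θ i j)
    (hθlim : ∀ i, Filter.Tendsto (fun x : ℤ => θ i x / (x : ℝ) ^ (d i))
      Filter.atTop (nhds (A i))) :
    (∀ᶠ V : ℝ in Filter.atTop,
      Summable (fun x : Fin m → ℕ =>
        ∏ i, (V ^ (d i) * c i) ^ (x i) / ∏ j ∈ Finset.range (x i), θ i (j + 1)) ∧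
      Summable (fun x : Fin m → ℕ =>
        ∏ i, (V ^ (d i) * c i * (A i)⁻¹) ^ (x i) / ((x i).factorial : ℝ) ^ (d i))) ∧
    Filter.Tendsto
      (fun V : ℝ =>
        (1 / V) * Real.log (∑' x : Fin m → ℕ,
          ∏ i, (V ^ (d i) * c i) ^ (x i) / ∏ j ∈ Finset.range (x i), θ i (j + 1)) -
        (1 / V) * Real.log (∑' x : Fin m → ℕ,
          ∏ i, (V ^ (d i) * c i * (A i)⁻¹) ^ (x i) / ((x i).factorial : ℝ) ^ (d i)))
      Filter.atTop (nhds 0) := by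
  set p : Fin m → ℕ → ℝ := fun i j => θ i (j + 1)
  set q : Fin m → ℕ → ℝ := fun i j => A i * ((j : ℝ) + 1) ^ d i
  have hp : ∀ i j, 0 < p i j := fun i j => hθpos i _ (by omega)
  have hq : ∀ i j, 0 < q i j := fun i j => by have := hA i; positivity
  have hpA : ∀ i, Tendsto (fun j : ℕ => p i j / ((j : ℝ) + 1) ^ d i) atTop (𝓝 (A i)) := fun i => by
    simpa [p, Function.comp_def] using (hθlim i).comp
      (tendsto_atTop_add_const_right _ 1 tendsto_natCast_atTop_atTop)
  have hqA : ∀ i, Tendsto (fun j : ℕ => q i j / ((j : ℝ) + 1) ^ d i) atTop (𝓝 (A i)) :=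
    fun i => tendsto_const_nhds.congr fun j => (mul_div_cancel_right₀ _ (by positivity)).symm
  have hmodel : ∀ V : ℝ, (fun x : Fin m → ℕ =>
      ∏ i, (V ^ (d i) * c i * (A i)⁻¹) ^ (x i) / ((x i).factorial : ℝ) ^ (d i)) =
      fun x => ∏ i, (V ^ d i * c i) ^ x i / ∏ j ∈ range (x i), q i j := fun V => by
    funext x
    refine prod_congr rfl fun i _ => ?_
    rw [prod_range_mul_succ_rpow, mul_pow, inv_pow]
    ring
  simp only [hmodel]
  constructor
  · filter_upwards [eventually_gt_atTop 0] with V hV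
    exact ⟨(hasSum_prod_pow_div_prod_range hp hpA hd hA hV hc).summable,
      (hasSum_prod_pow_div_prod_range hq hqA hd hA hV hc).summable⟩
  · have h := (tendsto_inv_mul_log_tsum_prod_pow_div_prod_range hp hpA hd hA hc).sub
      (tendsto_inv_mul_log_tsum_prod_pow_div_prod_range hq hqA hd hA hc)
    rwa [sub_self] at h

/-- Under the assumption `θ_i(x)/x^{d_i} → A_i`, for all sufficiently
large `V` both partition-function-like sums are finite, and the difference of their
scaled logarithms tends to `0` as `V → ∞`. -/
theorem stmt16 (m : ℕ) (d A c : Fin m → ℝ) (θ : Fin m → ℤ → ℝ)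
    (hd : ∀ i, 0 < d i) (hA : ∀ i, 0 < A i) (hc : ∀ i, 0 < c i)
    (hθnn : ∀ i x, 0 ≤ θ i x)
    (hθ0 : ∀ i, ∀ x : ℤ, x ≤ 0 → θ i x = 0)
    (hθpos : ∀ i, ∀ j : ℤ, 1 ≤ j → 0 < θ i j)
    (hθlim : ∀ i, Filter.Tendsto (fun x : ℤ => θ i x / (x : ℝ) ^ (d i))
      Filter.atTop (nhds (A i))) :
    (∀ᶠ V : ℝ in Filter.atTop,
      Summable (fun x : Fin m → ℕ =>
        ∏ i, (V ^ (d i) * c i) ^ (x i) / ∏ j ∈ Finset.range (x i), θ i (j + 1)) ∧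
      Summable (fun x : Fin m → ℕ =>
        ∏ i, (V ^ (d i) * c i * (A i)⁻¹) ^ (x i) / ((x i).factorial : ℝ) ^ (d i))) ∧
    Filter.Tendsto
      (fun V : ℝ =>
        (1 / V) * Real.log (∑' x : Fin m → ℕ,
          ∏ i, (V ^ (d i) * c i) ^ (x i) / ∏ j ∈ Finset.range (x i), θ i (j + 1)) -
        (1 / V) * Real.log (∑' x : Fin m → ℕ,
          ∏ i, (V ^ (d i) * c i * (A i)⁻¹) ^ (x i) / ((x i).factorial : ℝ) ^ (d i)))
      Filter.atTop (nhds 0) :=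
  stmt16_general m d A c θ hd hA hc hθpos hθlim
end
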